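/- arXiv:math/0409267 — 12 statements merged into one kernel-verified Lean document; each statement's English description precedes it below -/
import Mathlib

section
/- If S is a partial isometry in a C*-algebra B and H : A → A is a positive linear map on a closed *-subalgebra A ⊆ B such that S*aS = H(a)S*S for all a ∈ A, then H(a)S*S = S*S H(a) for every a ∈ A. -/
/-!
Write `P = S* S`. Since `S* S S* = S*`, the covariance relation gives `P H(a) P = H(a) P`, and
for a self-adjoint `h` with `P h P = h P`, taking adjoints yields `P h P = P h`, so `h` commutes
with `P`. A positive map sends self-adjoint elements to self-adjoint ones, because
`a = (‖a‖ + a) - ‖a‖` is a difference of positive elements of the unital algebra `A`; the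
general case follows by splitting `a` into its real and imaginary parts.
-/

section PartialIsometry

variable {R : Type*} [Monoid R] [StarMul R] {S : R}

lemma star_mul_self_mul_star_of_mul_star_mul_self (hS : S * star S * S = S) :
    star S * S * star S = star S := by
  simpa [star_mul, mul_assoc] using congrArg star hS

lemma star_mul_self_mul_conjugate_of_mul_star_mul_self (hS : S * star S * S = S) (x : R) :
    star S * S * (star S * x * S) = star S * x * S := by
  rw [← mul_assoc, ← mul_assoc, star_mul_self_mul_star_of_mul_star_mul_self hS]

end PartialIsometry

lemma IsSelfAdjoint.commute_of_mul_mul_eq {R : Type*} [Semigroup R] [StarMul R] {h P : R}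
    (hh : IsSelfAdjoint h) (hP : IsSelfAdjoint P) (hPhP : P * h * P = h * P) : Commute h P := by
  have hPh : P * h * P = P * h := by
    simpa [star_mul, hh.star_eq, hP.star_eq, mul_assoc] using congrArg star hPhP
  exact hPhP.symm.trans hPh

lemma isSelfAdjoint_apply_of_isSelfAdjoint {B : Type*} [CStarAlgebra B] [PartialOrder B]
    [StarOrderedRing B] {A : StarSubalgebra ℂ B} {F : Type*} [FunLike F A A]
    [LinearMapClass F ℂ A A] (f : F) (hf : ∀ a : A, 0 ≤ (a : B) → 0 ≤ (f a : B))
    {a : A} (ha : IsSelfAdjoint (a : B)) : IsSelfAdjoint (f a : B) := by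
  set n : A := algebraMap ℂ A ‖(a : B)‖
  have hn : (n : B) = algebraMap ℝ B ‖(a : B)‖ :=
    (IsScalarTower.algebraMap_apply ℝ ℂ B _).symm
  have hn_nonneg : 0 ≤ (n : B) := by
    rw [hn]
    exact algebraMap_nonneg _ (norm_nonneg _)
  have hna_nonneg : 0 ≤ ((n + a : A) : B) := by
    rw [AddMemClass.coe_add, hn, ← neg_le_iff_add_nonneg']
    exact ha.neg_algebraMap_norm_le_self
  have hfa : (f a : B) = f (n + a) - f n := by simp
  rw [hfa]
  exact (hf _ hna_nonneg).isSelfAdjoint.sub (hf _ hn_nonneg).isSelfAdjoint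

theorem stmt0_general
    {B : Type*} [CStarAlgebra B] [PartialOrder B] [StarOrderedRing B]
    (A : StarSubalgebra ℂ B)
    (S : B) (hS : S * star S * S = S)
    (H : A →L[ℂ] A)
    (hHpos : ∀ a : A, 0 ≤ (a : B) → 0 ≤ (H a : B))
    (hcov : ∀ a : A, star S * (a : B) * S = (H a : B) * (star S * S)) :
    ∀ a : A, (H a : B) * (star S * S) = (star S * S) * (H a : B) := by
  have hcomm (a : selfAdjoint A) : Commute (H a : B) (star S * S) := by
    have ha : IsSelfAdjoint ((a : A) : B) := a.prop.map A.subtype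
    refine (isSelfAdjoint_apply_of_isSelfAdjoint H hHpos ha).commute_of_mul_mul_eq
      (.star_mul_self S) ?_
    rw [mul_assoc, ← hcov, star_mul_self_mul_conjugate_of_mul_star_mul_self hS]
  intro a
  rw [← realPart_add_I_smul_imaginaryPart a, map_add, map_smul, AddMemClass.coe_add,
    SetLike.val_smul]
  exact ((hcomm _).add_left ((hcomm _).smul_left Complex.I)).eq

/-- If `S` is a partial isometry in a C*-algebra `B` and `H : A → A` is a positive
bounded linear map on a closed *-subalgebra `A ⊆ B` such that `S* a S = H(a) S* S`
for all `a ∈ A`, then `H(a) S* S = S* S H(a)` for every `a ∈ A`. -/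
theorem stmt0
    {B : Type*} [CStarAlgebra B] [PartialOrder B] [StarOrderedRing B]
    (A : StarSubalgebra ℂ B) (hA : IsClosed (A : Set B))
    (S : B) (hS : S * star S * S = S)
    (H : A →L[ℂ] A)
    (hHpos : ∀ a : A, 0 ≤ (a : B) → 0 ≤ (H a : B))
    (hcov : ∀ a : A, star S * (a : B) * S = (H a : B) * (star S * S)) :
    ∀ a : A, (H a : B) * (star S * S) = (star S * S) * (H a : B) :=
  stmt0_general A S hS H hHpos hcov
end

section
/- Under the covariance axioms S*aS = H(a)S*S and SaS* = V(a)SS*, together with the nondegeneracy condition that xS = yS implies x = y for x,y in the C*-algebra generated by V(A), one has V(H(V(a))) = V(a) for all a ∈ A. -/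
/-!
Multiplying `S a S* = V(a) S S*` on the right by `S` and using `S S* S = S` gives
`V(b) S = S b S* S` for every `b`. Applying this to `b = H(V a)` and then the covariance of `H`,
`V(H(V a)) S = S S* V(a) S = S S* S a S* S = V(a) S`,
and nondegeneracy cancels `S`.
-/

section GeneralizedInverse

variable {R : Type*} [Semigroup R] {S T : R}

theorem mul_eq_of_mul_mul_eq_mul_mul (hS : S * T * S = S) {a v : R}
    (hv : S * a * T = v * (S * T)) : v * S = S * a * T * S := by
  calc v * S = v * (S * T) * S := by rw [mul_assoc v, hS]
    _ = S * a * T * S := by rw [hv]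

theorem mul_eq_mul_of_covariant (hS : S * T * S = S) {a v h w : R}
    (hv : S * a * T = v * (S * T)) (hh : T * v * S = h * (T * S))
    (hw : S * h * T = w * (S * T)) : w * S = v * S := by
  calc w * S = S * (h * (T * S)) := by
        rw [mul_eq_of_mul_mul_eq_mul_mul hS hw]; simp only [mul_assoc]
    _ = S * T * (v * S) := by rw [← hh]; simp only [mul_assoc]
    _ = S * T * S * a * T * S := by rw [mul_eq_of_mul_mul_eq_mul_mul hS hv]; simp only [mul_assoc]
    _ = v * S := by rw [hS, mul_eq_of_mul_mul_eq_mul_mul hS hv]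

end GeneralizedInverse

theorem stmt2_general
    {B : Type*} [CStarAlgebra B]
    (A : StarSubalgebra ℂ B)
    (S : B) (hS : S * star S * S = S)
    (V H : A →L[ℂ] A)
    (hcovH : ∀ a : A, star S * (a : B) * S = (H a : B) * (star S * S))
    (hcovV : ∀ a : A, S * (a : B) * star S = (V a : B) * (S * star S))
    (hnd : ∀ x y : B,
      x ∈ (StarSubalgebra.topologicalClosure
        (StarAlgebra.adjoin ℂ (Set.range (fun a : A => (V a : B))))) →
      y ∈ (StarSubalgebra.topologicalClosure
        (StarAlgebra.adjoin ℂ (Set.range (fun a : A => (V a : B))))) →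
      x * S = y * S → x = y) :
    ∀ a : A, V (H (V a)) = V a := by
  have mem (b : A) : (V b : B) ∈ StarSubalgebra.topologicalClosure
      (StarAlgebra.adjoin ℂ (Set.range (fun a : A => (V a : B)))) :=
    StarSubalgebra.le_topologicalClosure _ (StarAlgebra.subset_adjoin ℂ _ ⟨b, rfl⟩)
  intro a
  exact Subtype.ext <| hnd _ _ (mem _) (mem a) <|
    mul_eq_mul_of_covariant hS (hcovV a) (hcovH (V a)) (hcovV (H (V a)))

/-- Under the covariance axioms `S* a S = H(a) S* S` and `S a S* = V(a) S S*`,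
together with the nondegeneracy condition that `x S = y S` implies `x = y` for
`x, y` in the C*-algebra generated by `V(A)`, one has `V(H(V(a))) = V(a)` for all
`a ∈ A`. -/
theorem stmt2
    {B : Type*} [CStarAlgebra B] [PartialOrder B] [StarOrderedRing B]
    (A : StarSubalgebra ℂ B) (hA : IsClosed (A : Set B))
    (S : B) (hS : S * star S * S = S)
    (V H : A →L[ℂ] A)
    (hVpos : ∀ a : A, 0 ≤ (a : B) → 0 ≤ (V a : B))
    (hHpos : ∀ a : A, 0 ≤ (a : B) → 0 ≤ (H a : B))
    (hcovH : ∀ a : A, star S * (a : B) * S = (H a : B) * (star S * S))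
    (hcovV : ∀ a : A, S * (a : B) * star S = (V a : B) * (S * star S))
    (hnd : ∀ x y : B,
      x ∈ (StarSubalgebra.topologicalClosure
        (StarAlgebra.adjoin ℂ (Set.range (fun a : A => (V a : B))))) →
      y ∈ (StarSubalgebra.topologicalClosure
        (StarAlgebra.adjoin ℂ (Set.range (fun a : A => (V a : B))))) →
      x * S = y * S → x = y) :
    ∀ a : A, V (H (V a)) = V a :=
  stmt2_general A S hS V H hcovH hcovV hnd
end

section
/- Under the covariance axioms S*aS = H(a)S*S and SaS* = V(a)SS*, together with nondegeneracy (xS = yS ⟹ x = y for x, y in C*(V(A))), one has V(aH(b)) = V(a)V(H(b)) for all a, b ∈ A. -/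
/-!
With `S S* S = S`, the covariance relation `S c S* = v S S*` can be multiplied on the right
by `S` to give `v S = S c S* S`. Applying this to `a H(b)` and moving `S* S` past `H(b)`
with `H(b) S* S = S* b S` shows `V(a H(b)) S = V(a) V(H(b)) S`; nondegeneracy cancels `S`.
-/

section PartialIsometry

variable {R : Type*} [Semigroup R] [Star R] {S : R}

theorem mul_partialIsometry_eq_of_conj_eq (hS : S * star S * S = S) {c v : R}
    (hcov : S * c * star S = v * (S * star S)) : v * S = S * c * (star S * S) := by
  calc v * S = v * (S * star S) * S := by rw [mul_assoc v, hS]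
    _ = S * c * (star S * S) := by rw [← hcov]; simp only [mul_assoc]

theorem mul_partialIsometry_eq_of_conj_eq_of_conj_mul_eq (hS : S * star S * S = S)
    {a b c u v w : R}
    (hc : star S * b * S = c * (star S * S))
    (hu : S * a * star S = u * (S * star S))
    (hv : S * c * star S = v * (S * star S))
    (hw : S * (a * c) * star S = w * (S * star S)) :
    w * S = u * v * S := by
  calc w * S = S * (a * c) * (star S * S) := mul_partialIsometry_eq_of_conj_eq hS hw
    _ = S * a * (star S * b * S) := by rw [hc]; simp only [mul_assoc]
    _ = u * (S * star S) * (b * S) := by rw [← hu]; simp only [mul_assoc]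
    _ = u * (S * (c * (star S * S))) := by rw [← hc]; simp only [mul_assoc]
    _ = u * v * S := by rw [← mul_assoc S, ← mul_partialIsometry_eq_of_conj_eq hS hv, mul_assoc]

end PartialIsometry

theorem stmt3_general
    {B : Type*} [CStarAlgebra B]
    (A : StarSubalgebra ℂ B)
    (S : B) (hS : S * star S * S = S)
    (V H : A →L[ℂ] A)
    (hcovH : ∀ a : A, star S * (a : B) * S = (H a : B) * (star S * S))
    (hcovV : ∀ a : A, S * (a : B) * star S = (V a : B) * (S * star S))
    (hnd : ∀ x y : B,
      x ∈ (StarSubalgebra.topologicalClosure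
        (StarAlgebra.adjoin ℂ (Set.range (fun a : A => (V a : B))))) →
      y ∈ (StarSubalgebra.topologicalClosure
        (StarAlgebra.adjoin ℂ (Set.range (fun a : A => (V a : B))))) →
      x * S = y * S → x = y) :
    ∀ a b : A, V (a * H b) = V a * V (H b) := by
  intro a b
  have hV_mem : ∀ c : A, (V c : B) ∈ (StarAlgebra.adjoin ℂ
      (Set.range (fun a : A => (V a : B)))).topologicalClosure := fun c =>
    StarSubalgebra.le_topologicalClosure _ (StarAlgebra.subset_adjoin ℂ _ ⟨c, rfl⟩)
  exact Subtype.ext <| hnd _ _ (hV_mem _) (mul_mem (hV_mem a) (hV_mem (H b))) <|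
    mul_partialIsometry_eq_of_conj_eq_of_conj_mul_eq hS (hcovH b) (hcovV a) (hcovV (H b)) (hcovV (a * H b))

/-- Under the covariance axioms `S* a S = H(a) S* S` and `S a S* = V(a) S S*`,
together with the nondegeneracy condition that `x S = y S` implies `x = y` for
`x, y` in the C*-algebra generated by `V(A)`, one has `V(a * H(b)) = V(a) * V(H(b))` for all `a, b ∈ A`. -/
theorem stmt3
    {B : Type*} [CStarAlgebra B] [PartialOrder B] [StarOrderedRing B]
    (A : StarSubalgebra ℂ B) (hA : IsClosed (A : Set B))
    (S : B) (hS : S * star S * S = S)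
    (V H : A →L[ℂ] A)
    (hVpos : ∀ a : A, 0 ≤ (a : B) → 0 ≤ (V a : B))
    (hHpos : ∀ a : A, 0 ≤ (a : B) → 0 ≤ (H a : B))
    (hcovH : ∀ a : A, star S * (a : B) * S = (H a : B) * (star S * S))
    (hcovV : ∀ a : A, S * (a : B) * star S = (V a : B) * (S * star S))
    (hnd : ∀ x y : B,
      x ∈ (StarSubalgebra.topologicalClosure
        (StarAlgebra.adjoin ℂ (Set.range (fun a : A => (V a : B))))) →
      y ∈ (StarSubalgebra.topologicalClosure
        (StarAlgebra.adjoin ℂ (Set.range (fun a : A => (V a : B))))) →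
      x * S = y * S → x = y) :
    ∀ a b : A, V (a * H b) = V a * V (H b) :=
  stmt3_general A S hS V H hcovH hcovV hnd
end

section
/- Let (V, H) be an interaction over a C*-algebra A. Then V(A) is a closed *-subalgebra of A. -/
/-! Since `V H V = V`, the range of `V` is the fixed-point set of the continuous map `V H`, hence
closed; `V a * V b = V (H (V a) * H (V b))` because `V` is multiplicative on `H(A)`; and a positive
`ℂ`-linear map preserves the involution, as it sends self-adjoint elements (differences of
positive ones) to self-adjoint ones. -/

open Function

theorem Set.range_eq_fixedPoints_comp {α β : Type*} {f : β → α} {g : α → β}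
    (hfgf : ∀ b, f (g (f b)) = f b) : Set.range f = fixedPoints (f ∘ g) := by
  ext a
  refine ⟨?_, fun h ↦ ⟨g a, h⟩⟩
  rintro ⟨b, rfl⟩
  exact hfgf b

theorem Set.mul_mem_range_of_map_mul {M : Type*} [Mul M] {f g : M → M}
    (hfgf : ∀ a, f (g (f a)) = f a) (hf : ∀ x y, x ∈ Set.range g → f (x * y) = f x * f y)
    {x y : M} (hx : x ∈ Set.range f) (hy : y ∈ Set.range f) : x * y ∈ Set.range f := by
  obtain ⟨a, rfl⟩ := hx
  obtain ⟨b, rfl⟩ := hy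
  refine ⟨g (f a) * g (f b), ?_⟩
  rw [hf _ _ ⟨f a, rfl⟩, hfgf, hfgf]

theorem LinearMap.map_star_of_nonneg {A B : Type*} [NonUnitalCStarAlgebra A] [PartialOrder A]
    [StarOrderedRing A] [NonUnitalCStarAlgebra B] [PartialOrder B] [StarOrderedRing B]
    (f : A →ₗ[ℂ] B) (hf : ∀ a, 0 ≤ a → 0 ≤ f a) (a : A) :
    f (star a) = star (f a) :=
  map_star (PositiveLinearMap.mk₀ f hf) a

theorem stmt4_general
    {A : Type*} [CStarAlgebra A] [PartialOrder A] [StarOrderedRing A]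
    (V H : A →L[ℂ] A)
    (hVpos : ∀ a : A, 0 ≤ a → 0 ≤ V a)
    (hVHV : ∀ a : A, V (H (V a)) = V a)
    (hVmul : ∀ x y : A, (x ∈ Set.range H ∨ y ∈ Set.range H) → V (x * y) = V x * V y) :
    IsClosed (Set.range V) ∧
    (∀ x ∈ Set.range V, ∀ y ∈ Set.range V, x * y ∈ Set.range V) ∧
    (∀ x ∈ Set.range V, star x ∈ Set.range V) := by
  refine ⟨?closed, ?mul, ?star⟩
  case closed =>
    rw [Set.range_eq_fixedPoints_comp hVHV]
    exact isClosed_fixedPoints (V.continuous.comp H.continuous)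
  case mul =>
    exact fun x hx y hy ↦
      Set.mul_mem_range_of_map_mul hVHV (fun x y hx ↦ hVmul x y (.inl hx)) hx hy
  case star =>
    rintro x ⟨a, rfl⟩
    exact ⟨star a, V.toLinearMap.map_star_of_nonneg hVpos a⟩

/-- Let `(V, H)` be an interaction over a C*-algebra `A`. Then `V(A)` is a closed
*-subalgebra of `A`: the range of `V` is norm-closed, closed under multiplication
and closed under the involution (it is automatically a linear subspace, being the
range of a linear map). -/
theorem stmt4
    {A : Type*} [CStarAlgebra A] [PartialOrder A] [StarOrderedRing A]
    (V H : A →L[ℂ] A)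
    (hVpos : ∀ a : A, 0 ≤ a → 0 ≤ V a)
    (hHpos : ∀ a : A, 0 ≤ a → 0 ≤ H a)
    (hVHV : ∀ a : A, V (H (V a)) = V a)
    (hHVH : ∀ a : A, H (V (H a)) = H a)
    (hVmul : ∀ x y : A, (x ∈ Set.range H ∨ y ∈ Set.range H) → V (x * y) = V x * V y)
    (hHmul : ∀ x y : A, (x ∈ Set.range V ∨ y ∈ Set.range V) → H (x * y) = H x * H y) :
    IsClosed (Set.range V) ∧
    (∀ x ∈ Set.range V, ∀ y ∈ Set.range V, x * y ∈ Set.range V) ∧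
    (∀ x ∈ Set.range V, star x ∈ Set.range V) :=
  stmt4_general V H hVpos hVHV hVmul
end

section
/- Let (V, H) be an interaction over a C*-algebra A. Then E_V := V ∘ H is a conditional expectation from A onto V(A); that is, E_V is positive, idempotent with range V(A), and satisfies E_V(ab) = E_V(a)b and E_V(ba) = bE_V(a) for all a ∈ A and b ∈ V(A). -/
open Set

theorem Set.range_comp_eq_range_of_comp_comp_eq {α β : Type*} {f : α → β} {g : β → α}
    (hfgf : f ∘ g ∘ f = f) : range (f ∘ g) = range f :=
  (range_comp_subset_range g f).antisymm fun _ ⟨a, ha⟩ => ⟨f a, ha ▸ congrFun hfgf a⟩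

section ConditionalExpectation

variable {M : Type*} [Mul M] {V H : M → M}

theorem apply_apply_mul_eq_mul_of_mem_range_right (hVHV : ∀ a, V (H (V a)) = V a)
    (hVmul : ∀ x y, x ∈ range H → V (x * y) = V x * V y)
    (hHmul : ∀ x y, y ∈ range V → H (x * y) = H x * H y)
    (a : M) {b : M} (hb : b ∈ range V) : V (H (a * b)) = V (H a) * b := by
  obtain ⟨c, rfl⟩ := hb
  rw [hHmul a (V c) ⟨c, rfl⟩, hVmul (H a) (H (V c)) ⟨a, rfl⟩, hVHV]

theorem apply_apply_mul_eq_mul_of_mem_range_left (hVHV : ∀ a, V (H (V a)) = V a)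
    (hVmul : ∀ x y, y ∈ range H → V (x * y) = V x * V y)
    (hHmul : ∀ x y, x ∈ range V → H (x * y) = H x * H y)
    (a : M) {b : M} (hb : b ∈ range V) : V (H (b * a)) = b * V (H a) := by
  obtain ⟨c, rfl⟩ := hb
  rw [hHmul (V c) a ⟨c, rfl⟩, hVmul (H (V c)) (H a) ⟨a, rfl⟩, hVHV]

end ConditionalExpectation

theorem stmt5_general
    {A : Type*} [CStarAlgebra A] [PartialOrder A]
    (V H : A →L[ℂ] A)
    (hVpos : ∀ a : A, 0 ≤ a → 0 ≤ V a)
    (hHpos : ∀ a : A, 0 ≤ a → 0 ≤ H a)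
    (hVHV : ∀ a : A, V (H (V a)) = V a)
    (hVmul : ∀ x y : A, (x ∈ Set.range H ∨ y ∈ Set.range H) → V (x * y) = V x * V y)
    (hHmul : ∀ x y : A, (x ∈ Set.range V ∨ y ∈ Set.range V) → H (x * y) = H x * H y) :
    (∀ a : A, 0 ≤ a → 0 ≤ V (H a)) ∧
    (∀ a : A, V (H (V (H a))) = V (H a)) ∧
    (Set.range (fun a : A => V (H a)) = Set.range V) ∧
    (∀ a : A, ∀ b ∈ Set.range V, V (H (a * b)) = V (H a) * b) ∧
    (∀ a : A, ∀ b ∈ Set.range V, V (H (b * a)) = b * V (H a)) :=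
  ⟨fun _ ha => hVpos _ (hHpos _ ha),
    fun a => hVHV (H a),
    range_comp_eq_range_of_comp_comp_eq (funext hVHV),
    fun a _ hb => apply_apply_mul_eq_mul_of_mem_range_right hVHV
      (fun x y hx => hVmul x y (.inl hx)) (fun x y hy => hHmul x y (.inr hy)) a hb,
    fun a _ hb => apply_apply_mul_eq_mul_of_mem_range_left hVHV
      (fun x y hy => hVmul x y (.inr hy)) (fun x y hx => hHmul x y (.inl hx)) a hb⟩

/-- Let `(V, H)` be an interaction over a C*-algebra `A`.  Then `E_V := V ∘ H` is a
conditional expectation from `A` onto `V(A)`: it is positive, idempotent with range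
`V(A)`, and satisfies `E_V(a b) = E_V(a) b` and `E_V(b a) = b E_V(a)` for all
`a ∈ A` and `b ∈ V(A)`. -/
theorem stmt5
    {A : Type*} [CStarAlgebra A] [PartialOrder A] [StarOrderedRing A]
    (V H : A →L[ℂ] A)
    (hVpos : ∀ a : A, 0 ≤ a → 0 ≤ V a)
    (hHpos : ∀ a : A, 0 ≤ a → 0 ≤ H a)
    (hVHV : ∀ a : A, V (H (V a)) = V a)
    (hHVH : ∀ a : A, H (V (H a)) = H a)
    (hVmul : ∀ x y : A, (x ∈ Set.range H ∨ y ∈ Set.range H) → V (x * y) = V x * V y)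
    (hHmul : ∀ x y : A, (x ∈ Set.range V ∨ y ∈ Set.range V) → H (x * y) = H x * H y) :
    (∀ a : A, 0 ≤ a → 0 ≤ V (H a)) ∧
    (∀ a : A, V (H (V (H a))) = V (H a)) ∧
    (Set.range (fun a : A => V (H a)) = Set.range V) ∧
    (∀ a : A, ∀ b ∈ Set.range V, V (H (a * b)) = V (H a) * b) ∧
    (∀ a : A, ∀ b ∈ Set.range V, V (H (b * a)) = b * V (H a)) :=
  stmt5_general V H hVpos hHpos hVHV hVmul hHmul
end

section
/- Let (V, H) be an interaction over a C*-algebra A. Then the restriction V₁ : H(A) → V(A) of V and the restriction H₁ : V(A) → H(A) of H are mutually inverse *-isomorphisms. -/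
open scoped ComplexStarModule

lemma PositiveLinearMap.map_star {F E R : Type*} [AddCommGroup E] [PartialOrder E]
    [StarAddMonoid E] [Module ℂ E] [StarModule ℂ E] [SelfAdjointDecompose E]
    [NonUnitalRing R] [PartialOrder R] [StarRing R] [StarOrderedRing R] [Module ℂ R]
    [StarModule ℂ R] [FunLike F E R] [LinearMapClass F ℂ E R] [OrderHomClass F E R]
    (f : F) (a : E) : f (star a) = star (f a) := by
  have hre : IsSelfAdjoint (f (ℜ a)) := (ℜ a).2.map' f
  have him : IsSelfAdjoint (f (ℑ a)) := (ℑ a).2.map' f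
  conv_lhs => rw [← realPart_add_I_smul_imaginaryPart a]
  conv_rhs => rw [← realPart_add_I_smul_imaginaryPart a]
  simp [hre.star_eq, him.star_eq]

/-- Let `(V, H)` be an interaction over a C*-algebra `A`.  Then the restriction
`V₁ : H(A) → V(A)` of `V` and the restriction `H₁ : V(A) → H(A)` of `H` are
mutually inverse *-isomorphisms: they are inverse to each other, multiplicative and
star-preserving (and map the respective ranges onto each other). -/
theorem stmt6
    {A : Type*} [CStarAlgebra A] [PartialOrder A] [StarOrderedRing A]
    (V H : A →L[ℂ] A)
    (hVpos : ∀ a : A, 0 ≤ a → 0 ≤ V a)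
    (hHpos : ∀ a : A, 0 ≤ a → 0 ≤ H a)
    (hVHV : ∀ a : A, V (H (V a)) = V a)
    (hHVH : ∀ a : A, H (V (H a)) = H a)
    (hVmul : ∀ x y : A, (x ∈ Set.range H ∨ y ∈ Set.range H) → V (x * y) = V x * V y)
    (hHmul : ∀ x y : A, (x ∈ Set.range V ∨ y ∈ Set.range V) → H (x * y) = H x * H y) :
    (∀ x ∈ Set.range H, V x ∈ Set.range V) ∧
    (∀ y ∈ Set.range V, H y ∈ Set.range H) ∧
    (∀ x ∈ Set.range H, H (V x) = x) ∧
    (∀ y ∈ Set.range V, V (H y) = y) ∧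
    (∀ x ∈ Set.range H, ∀ y ∈ Set.range H, V (x * y) = V x * V y) ∧
    (∀ x ∈ Set.range H, V (star x) = star (V x)) ∧
    (∀ x ∈ Set.range V, ∀ y ∈ Set.range V, H (x * y) = H x * H y) ∧
    (∀ x ∈ Set.range V, H (star x) = star (H x)) := by
  have hVstar := PositiveLinearMap.map_star (PositiveLinearMap.mk₀ (V : A →ₗ[ℂ] A) hVpos)
  have hHstar := PositiveLinearMap.map_star (PositiveLinearMap.mk₀ (H : A →ₗ[ℂ] A) hHpos)
  refine ⟨fun x _ ↦ ⟨x, rfl⟩, fun y _ ↦ ⟨y, rfl⟩, ?_, ?_, fun x hx y _ ↦ hVmul x y (.inl hx),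
    fun x _ ↦ hVstar x, fun x hx y _ ↦ hHmul x y (.inl hx), fun x _ ↦ hHstar x⟩
  · rintro x ⟨a, rfl⟩
    exact hHVH a
  · rintro y ⟨a, rfl⟩
    exact hVHV a
end

section
/- Let A be a unital C*-algebra, α an endomorphism of A, and L a transfer operator for α (i.e., L is positive linear and L(aα(b)) = L(a)b for all a, b ∈ A) with L(1) = 1. Then (α, L) is an interaction over A: αLα = α, LαL = L, α(xy) = α(x)α(y) if x or y ∈ L(A), and L(xy) = L(x)L(y) if x or y ∈ α(A). -/
/-!
With `L 1 = 1` the transfer identity gives `L (α b) = b`, so `L ∘ α = id`; the first two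
identities follow at once, and `α` is multiplicative on all of `A`. For `y = α b` the
transfer identity reads `L (x * α b) = L x * L (α b)`. The case `x = α a` is its adjoint:
a positive map on a C⋆-algebra commutes with `star`, because the algebra is spanned by its
nonnegative (hence selfadjoint) elements.
-/

open scoped ComplexStarModule

section PositiveMap

variable {A B F : Type*} [NonUnitalCStarAlgebra A] [PartialOrder A] [StarOrderedRing A]
  [NonUnitalRing B] [StarRing B] [PartialOrder B] [StarOrderedRing B]
  [Module ℂ B] [StarModule ℂ B] [FunLike F A B] [LinearMapClass F ℂ A B]

theorem map_star_of_map_nonneg (f : F) (hf : ∀ a : A, 0 ≤ a → 0 ≤ f a) (x : A) :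
    f (star x) = star (f x) := by
  have hx : x ∈ Submodule.span ℂ {a : A | 0 ≤ a} := by
    rw [CStarAlgebra.span_nonneg]
    trivial
  induction hx using Submodule.span_induction with
  | mem a ha => rw [ha.isSelfAdjoint.star_eq, (hf a ha).isSelfAdjoint.star_eq]
  | zero => simp
  | add a b _ _ ha hb => rw [star_add, map_add, map_add, star_add, ha, hb]
  | smul c a _ ha => rw [star_smul, map_smul, map_smul, star_smul, ha]

end PositiveMap

def IsTransferOperator {A : Type*} [Mul A] (α L : A → A) : Prop :=
  ∀ a b, L (a * α b) = L a * b

namespace IsTransferOperator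

theorem apply_map {A : Type*} [MulOneClass A] {α L : A → A} (h : IsTransferOperator α L)
    (hL1 : L 1 = 1) (b : A) : L (α b) = b := by
  simpa [hL1] using h 1 b

theorem apply_map_mul {A : Type*} [Mul A] [StarMul A] {α L : A → A}
    (h : IsTransferOperator α L) (hα : ∀ a, α (star a) = star (α a))
    (hL : ∀ a, L (star a) = star (L a)) (a y : A) : L (α a * y) = a * L y := by
  calc L (α a * y) = L (star (star y * α (star a))) := by rw [star_mul, hα, star_star, star_star]
    _ = star (L (star y) * star a) := by rw [hL, h]
    _ = a * L y := by rw [star_mul, star_star, hL, star_star]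

end IsTransferOperator

/-- Let `A` be a unital C*-algebra, `α` an endomorphism of `A`, and `L` a transfer
operator for `α` (a positive linear map with `L(a α(b)) = L(a) b`) with `L(1) = 1`.
Then `(α, L)` is an interaction over `A`: `αLα = α`, `LαL = L`, `α(xy) = α(x)α(y)`
if `x` or `y` lies in `L(A)`, and `L(xy) = L(x)L(y)` if `x` or `y` lies in `α(A)`. -/
theorem stmt10
    {A : Type*} [CStarAlgebra A] [PartialOrder A] [StarOrderedRing A]
    (α : A →⋆ₐ[ℂ] A) (L : A →L[ℂ] A)
    (hLpos : ∀ a : A, 0 ≤ a → 0 ≤ L a)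
    (hTrans : ∀ a b : A, L (a * α b) = L a * b)
    (hL1 : L 1 = 1) :
    (∀ a : A, α (L (α a)) = α a) ∧
    (∀ a : A, L (α (L a)) = L a) ∧
    (∀ x y : A, (x ∈ Set.range L ∨ y ∈ Set.range L) → α (x * y) = α x * α y) ∧
    (∀ x y : A, (x ∈ Set.range α ∨ y ∈ Set.range α) → L (x * y) = L x * L y) := by
  have hT : IsTransferOperator α L := hTrans
  have hLα : ∀ a, L (α a) = a := hT.apply_map hL1
  refine ⟨fun a => by rw [hLα], fun a => by rw [hLα], fun x y _ => map_mul α x y, ?_⟩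
  rintro x y (⟨a, rfl⟩ | ⟨b, rfl⟩)
  · rw [hT.apply_map_mul (map_star α) (map_star_of_map_nonneg L hLpos), hLα]
  · rw [hTrans, hLα]
end

section
/- Let (π, S, B) be a covariant representation of an interaction (V, H) satisfying the nondegeneracy condition (i): for x, y ∈ V(A), π(x)S = π(y)S implies x = y. Then condition (ii) also holds: for x, y ∈ H(A), Sπ(x) = Sπ(y) implies x = y. -/
/-!
Right multiplication by `S*S` turns `S π(x)` into `π(V x) S`, by the covariance relation for `V`
and `S S* S = S`. So `S π(x) = S π(y)` forces `π(V x) S = π(V y) S`, hence `V x = V y` by (i),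
and applying `H` recovers `x = y` on `H(A)` because `H ∘ V` is the identity there (`HVH = H`).
-/

theorem mul_mul_star_mul_eq_of_covariant {A B : Type*} [Semigroup B] [Star B]
    (π : A → B) (V : A → A) (S : B) (hS : S * star S * S = S)
    (hcov : ∀ a : A, S * π a * star S = π (V a) * (S * star S)) (a : A) :
    S * π a * (star S * S) = π (V a) * S :=
  calc S * π a * (star S * S) = S * π a * star S * S := by rw [mul_assoc _ (star S)]
    _ = π (V a) * (S * star S * S) := by rw [hcov, mul_assoc]
    _ = π (V a) * S := by rw [hS]

theorem stmt12_general
    {A : Type*} [CStarAlgebra A]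
    {B : Type*} [CStarAlgebra B]
    (V H : A →L[ℂ] A)
    (hHVH : ∀ a : A, H (V (H a)) = H a)
    (π : A →⋆ₐ[ℂ] B) (S : B) (hS : S * star S * S = S)
    (hcovV : ∀ a : A, S * π a * star S = π (V a) * (S * star S))
    (hnd : ∀ x ∈ Set.range V, ∀ y ∈ Set.range V, π x * S = π y * S → x = y) :
    ∀ x ∈ Set.range H, ∀ y ∈ Set.range H, S * π x = S * π y → x = y := by
  rintro _ ⟨a, rfl⟩ _ ⟨b, rfl⟩ h
  have hV : V (H a) = V (H b) := by
    have hcov := mul_mul_star_mul_eq_of_covariant π V S hS hcovV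
    exact hnd _ ⟨H a, rfl⟩ _ ⟨H b, rfl⟩ (by rw [← hcov, ← hcov, h])
  rw [← hHVH a, ← hHVH b, hV]

/-- Let `(π, S, B)` be a covariant representation of an interaction `(V, H)` over a
C*-algebra `A`, satisfying the nondegeneracy condition (i): for `x, y ∈ V(A)`,
`π(x) S = π(y) S` implies `x = y`.  Then condition (ii) also holds: for
`x, y ∈ H(A)`, `S π(x) = S π(y)` implies `x = y`. -/
theorem stmt12
    {A : Type*} [CStarAlgebra A] [PartialOrder A] [StarOrderedRing A]
    {B : Type*} [CStarAlgebra B]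
    (V H : A →L[ℂ] A)
    (hVpos : ∀ a : A, 0 ≤ a → 0 ≤ V a)
    (hHpos : ∀ a : A, 0 ≤ a → 0 ≤ H a)
    (hVHV : ∀ a : A, V (H (V a)) = V a)
    (hHVH : ∀ a : A, H (V (H a)) = H a)
    (hVmul : ∀ x y : A, (x ∈ Set.range H ∨ y ∈ Set.range H) → V (x * y) = V x * V y)
    (hHmul : ∀ x y : A, (x ∈ Set.range V ∨ y ∈ Set.range V) → H (x * y) = H x * H y)
    (π : A →⋆ₐ[ℂ] B) (S : B) (hS : S * star S * S = S)
    (hcovV : ∀ a : A, S * π a * star S = π (V a) * (S * star S))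
    (hcovH : ∀ a : A, star S * π a * S = π (H a) * (star S * S))
    (hnd : ∀ x ∈ Set.range V, ∀ y ∈ Set.range V, π x * S = π y * S → x = y) :
    ∀ x ∈ Set.range H, ∀ y ∈ Set.range H, S * π x = S * π y → x = y :=
  stmt12_general V H hHVH π S hS hcovV hnd
end

section
/- Let (π, S, B) be a covariant representation of an interaction (V, H) over A. If the conditional expectation E_H = H∘V is faithful, then π is injective. -/
/-!
If `π a = 0`, then, since `S` is a partial isometry, covariance gives
`π (V (a⋆a)) S = S π (a⋆a) S⋆ S = 0 = π (V 0) S`, so nondegeneracy yields `V (a⋆a) = 0`.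
Hence `E_H (a⋆a) = 0`, and faithfulness gives `a = 0`.
-/

section Covariance

variable {A B : Type*}

theorem mul_eq_of_covariant [Semigroup B] [Star B] {π : A → B} {V : A → A} {S : B}
    (hS : S * star S * S = S) (hcovV : ∀ a : A, S * π a * star S = π (V a) * (S * star S))
    (a : A) : π (V a) * S = S * π a * star S * S := by
  rw [hcovV, mul_assoc, hS]

theorem map_eq_zero_of_map_eq_zero_of_covariant [Zero A] [SemigroupWithZero B] [Star B]
    {F G : Type*} [FunLike F A B] [ZeroHomClass F A B] [FunLike G A A] [ZeroHomClass G A A]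
    {π : F} {V : G} {S : B} (hS : S * star S * S = S)
    (hcovV : ∀ a : A, S * π a * star S = π (V a) * (S * star S))
    (hnd : ∀ x ∈ Set.range V, ∀ y ∈ Set.range V, π x * S = π y * S → x = y)
    {a : A} (ha : π a = 0) : V a = 0 := by
  refine hnd _ ⟨a, rfl⟩ _ ⟨0, map_zero V⟩ ?_
  rw [mul_eq_of_covariant hS hcovV, ha, map_zero, mul_zero, zero_mul, zero_mul]

end Covariance

theorem stmt13_general
    {A : Type*} [CStarAlgebra A]
    {B : Type*} [CStarAlgebra B]
    (V H : A →L[ℂ] A)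
    (π : A →⋆ₐ[ℂ] B) (S : B) (hS : S * star S * S = S)
    (hcovV : ∀ a : A, S * π a * star S = π (V a) * (S * star S))
    (hnd : ∀ x ∈ Set.range V, ∀ y ∈ Set.range V, π x * S = π y * S → x = y)
    (hfaithful : ∀ a : A, H (V (star a * a)) = 0 → a = 0) :
    Function.Injective π := by
  rw [injective_iff_map_eq_zero]
  intro a ha
  have hker : π (star a * a) = 0 := by rw [map_mul, ha, mul_zero]
  apply hfaithful
  rw [map_eq_zero_of_map_eq_zero_of_covariant hS hcovV hnd hker, map_zero]

/-- Let `(π, S, B)` be a nondegenerate covariant representation of an interaction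
`(V, H)` over a C*-algebra `A`.  If the conditional expectation `E_H = H ∘ V` is
faithful, then `π` is injective. -/
theorem stmt13
    {A : Type*} [CStarAlgebra A] [PartialOrder A] [StarOrderedRing A]
    {B : Type*} [CStarAlgebra B]
    (V H : A →L[ℂ] A)
    (hVpos : ∀ a : A, 0 ≤ a → 0 ≤ V a)
    (hHpos : ∀ a : A, 0 ≤ a → 0 ≤ H a)
    (hVHV : ∀ a : A, V (H (V a)) = V a)
    (hHVH : ∀ a : A, H (V (H a)) = H a)
    (hVmul : ∀ x y : A, (x ∈ Set.range H ∨ y ∈ Set.range H) → V (x * y) = V x * V y)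
    (hHmul : ∀ x y : A, (x ∈ Set.range V ∨ y ∈ Set.range V) → H (x * y) = H x * H y)
    (π : A →⋆ₐ[ℂ] B) (S : B) (hS : S * star S * S = S)
    (hcovV : ∀ a : A, S * π a * star S = π (V a) * (S * star S))
    (hcovH : ∀ a : A, star S * π a * S = π (H a) * (star S * S))
    (hnd : ∀ x ∈ Set.range V, ∀ y ∈ Set.range V, π x * S = π y * S → x = y)
    (hfaithful : ∀ a : A, H (V (star a * a)) = 0 → a = 0) :
    Function.Injective π :=
  stmt13_general V H π S hS hcovV hnd hfaithful
end

section
/- In the setting of section 2 (A ⊆ B, S a partial isometry with S*aS = H(a)S*S, SaS* = V(a)SS*, and nondegeneracy), for any a₁,a₂,b₁,b₂,c₁,c₂ ∈ A one has (a₁Sa₂)(b₁Sb₂)*(c₁Sc₂) = a₁V(a₂b₂*) S H(b₁*c₁) c₂. Consequently the closed linear span Y of ASA is a ternary ring of operators (YY*Y ⊆ Y). -/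
/-!
Writing `T = S*`, the triple product `(a₁Sa₂)(b₁Sb₂)*(c₁Sc₂)` is `a₁ (S x T y S) c₂` with
`x = a₂b₂*` and `y = b₁*c₁`. Covariance turns `SxT` into `V(x) ST` and `TyS` into `H(y) TS`;
moving the projection `TS` past `H(y)` leaves `V(x) (STS) H(y) = V(x) S H(y)`. So the generators
`ASA` of `Y` are closed under `(x, y, z) ↦ x y* z`, and this passes to their span by
(conjugate-)linearity and to its closure by continuity.
-/

theorem mul_mul_mul_mul_eq_of_covariance {M : Type*} [Semigroup M] {s t x y v h : M}
    (hs : s * t * s = s) (hv : s * x * t = v * (s * t)) (hh : t * y * s = h * (t * s))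
    (hcomm : h * (t * s) = t * s * h) :
    s * x * t * y * s = v * s * h :=
  calc s * x * t * y * s = v * s * (t * y * s) := by rw [hv]; simp only [mul_assoc]
    _ = v * (s * t * s) * h := by rw [hh, hcomm]; simp only [mul_assoc]
    _ = v * s * h := by rw [hs]

namespace Submodule

variable {R B : Type*} [CommSemiring R] [Semiring B] [StarRing B] [Algebra R B]

def IsTernary (Y : Submodule R B) : Prop :=
  ∀ x ∈ Y, ∀ y ∈ Y, ∀ z ∈ Y, x * star y * z ∈ Y

theorem isTernary_span [StarRing R] [StarModule R B] {M : Set B}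
    (hM : ∀ x ∈ M, ∀ y ∈ M, ∀ z ∈ M, x * star y * z ∈ span R M) : IsTernary (span R M) := by
  intro x hx y hy z hz
  induction hx using span_induction with
  | mem x hx =>
    induction hy using span_induction with
    | mem y hy =>
      induction hz using span_induction with
      | mem z hz => exact hM x hx y hy z hz
      | zero => simp
      | add z₁ z₂ _ _ h₁ h₂ => rw [mul_add]; exact add_mem h₁ h₂
      | smul c z _ h => rw [mul_smul_comm]; exact smul_mem _ c h
    | zero => simp
    | add y₁ y₂ _ _ h₁ h₂ => rw [star_add, mul_add, add_mul]; exact add_mem h₁ h₂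
    | smul c y _ h => rw [star_smul, mul_smul_comm, smul_mul_assoc]; exact smul_mem _ _ h
  | zero => simp
  | add x₁ x₂ _ _ h₁ h₂ => rw [add_mul, add_mul]; exact add_mem h₁ h₂
  | smul c x _ h => rw [smul_mul_assoc, smul_mul_assoc]; exact smul_mem _ c h

theorem IsTernary.topologicalClosure [TopologicalSpace B] [IsTopologicalSemiring B]
    [ContinuousStar B] [ContinuousConstSMul R B] {Y : Submodule R B} (hY : Y.IsTernary) :
    Y.topologicalClosure.IsTernary := by
  intro x hx y hy z hz
  have hxyz : (x, y, z) ∈ closure ((Y : Set B) ×ˢ (Y : Set B) ×ˢ (Y : Set B)) := by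
    simp only [closure_prod_eq]
    exact ⟨hx, hy, hz⟩
  exact map_mem_closure (f := fun p : B × B × B => p.1 * star p.2.1 * p.2.2) (by fun_prop)
    hxyz fun _ ⟨h₁, h₂, h₃⟩ => hY _ h₁ _ h₂ _ h₃

end Submodule

theorem triple_product_eq_of_covariance {R B : Type*} [CommSemiring R] [StarRing R] [Semiring B]
    [StarRing B] [Algebra R B] [StarModule R B] {A : StarSubalgebra R B} {S : B} {V H : A → A}
    (hS : S * star S * S = S)
    (hcovH : ∀ a : A, star S * (a : B) * S = (H a : B) * (star S * S))
    (hcovV : ∀ a : A, S * (a : B) * star S = (V a : B) * (S * star S))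
    (hcommH : ∀ a : A, (H a : B) * (star S * S) = (star S * S) * (H a : B))
    (a₁ a₂ b₁ b₂ c₁ c₂ : A) :
    ((a₁ : B) * S * (a₂ : B)) * star ((b₁ : B) * S * (b₂ : B)) * ((c₁ : B) * S * (c₂ : B)) =
      (a₁ : B) * (V (a₂ * star b₂) : B) * S * (H (star b₁ * c₁) : B) * (c₂ : B) := by
  have hmiddle := mul_mul_mul_mul_eq_of_covariance hS (hcovV (a₂ * star b₂))
    (hcovH (star b₁ * c₁)) (hcommH _)
  calc _ = (a₁ : B) * (S * (a₂ * star b₂ : A) * star S * (star b₁ * c₁ : A) * S) * c₂ := by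
        simp only [star_mul, MulMemClass.coe_mul, StarMemClass.coe_star, mul_assoc]
    _ = _ := by rw [hmiddle]; simp only [mul_assoc]

theorem stmt14_general
    {B : Type*} [CStarAlgebra B]
    (A : StarSubalgebra ℂ B)
    (S : B) (hS : S * star S * S = S)
    (V H : A →L[ℂ] A)
    (hcovH : ∀ a : A, star S * (a : B) * S = (H a : B) * (star S * S))
    (hcovV : ∀ a : A, S * (a : B) * star S = (V a : B) * (S * star S))
    (hcommH : ∀ a : A, (H a : B) * (star S * S) = (star S * S) * (H a : B)) :
    (∀ a₁ a₂ b₁ b₂ c₁ c₂ : A,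
      ((a₁ : B) * S * (a₂ : B)) * star ((b₁ : B) * S * (b₂ : B)) *
        ((c₁ : B) * S * (c₂ : B)) =
      (a₁ : B) * (V (a₂ * star b₂) : B) * S * (H (star b₁ * c₁) : B) * (c₂ : B)) ∧
    (∀ x ∈ (Submodule.span ℂ {x : B | ∃ a b : A, (a : B) * S * (b : B) = x}).topologicalClosure,
     ∀ y ∈ (Submodule.span ℂ {x : B | ∃ a b : A, (a : B) * S * (b : B) = x}).topologicalClosure,
     ∀ z ∈ (Submodule.span ℂ {x : B | ∃ a b : A, (a : B) * S * (b : B) = x}).topologicalClosure,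
      x * star y * z ∈
        (Submodule.span ℂ {x : B | ∃ a b : A, (a : B) * S * (b : B) = x}).topologicalClosure) := by
  have triple := triple_product_eq_of_covariance (V := V) (H := H) hS hcovH hcovV hcommH
  refine ⟨triple, Submodule.IsTernary.topologicalClosure <| Submodule.isTernary_span ?_⟩
  rintro _ ⟨a₁, a₂, rfl⟩ _ ⟨b₁, b₂, rfl⟩ _ ⟨c₁, c₂, rfl⟩
  refine Submodule.subset_span ⟨a₁ * V (a₂ * star b₂), H (star b₁ * c₁) * c₂, ?_⟩
  rw [triple]
  simp only [MulMemClass.coe_mul, mul_assoc]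

/-- In the setting of section 2 (`A ⊆ B` a closed *-subalgebra, `S` a partial
isometry with `S* a S = H(a) S* S`, `S a S* = V(a) S S*`, `H(a)` commuting with
`S* S` and `V(a)` with `S S*`), for any `a₁, a₂, b₁, b₂, c₁, c₂ ∈ A` one has
`(a₁ S a₂)(b₁ S b₂)*(c₁ S c₂) = a₁ V(a₂ b₂*) S H(b₁* c₁) c₂`.  Consequently the
closed linear span `Y` of `A S A` is a ternary ring of operators: `Y Y* Y ⊆ Y`. -/
theorem stmt14
    {B : Type*} [CStarAlgebra B] [PartialOrder B] [StarOrderedRing B]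
    (A : StarSubalgebra ℂ B) (hA : IsClosed (A : Set B))
    (S : B) (hS : S * star S * S = S)
    (V H : A →L[ℂ] A)
    (hVpos : ∀ a : A, 0 ≤ (a : B) → 0 ≤ (V a : B))
    (hHpos : ∀ a : A, 0 ≤ (a : B) → 0 ≤ (H a : B))
    (hcovH : ∀ a : A, star S * (a : B) * S = (H a : B) * (star S * S))
    (hcovV : ∀ a : A, S * (a : B) * star S = (V a : B) * (S * star S))
    (hcommH : ∀ a : A, (H a : B) * (star S * S) = (star S * S) * (H a : B))
    (hcommV : ∀ a : A, (V a : B) * (S * star S) = (S * star S) * (V a : B)) :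
    (∀ a₁ a₂ b₁ b₂ c₁ c₂ : A,
      ((a₁ : B) * S * (a₂ : B)) * star ((b₁ : B) * S * (b₂ : B)) *
        ((c₁ : B) * S * (c₂ : B)) =
      (a₁ : B) * (V (a₂ * star b₂) : B) * S * (H (star b₁ * c₁) : B) * (c₂ : B)) ∧
    (∀ x ∈ (Submodule.span ℂ {x : B | ∃ a b : A, (a : B) * S * (b : B) = x}).topologicalClosure,
     ∀ y ∈ (Submodule.span ℂ {x : B | ∃ a b : A, (a : B) * S * (b : B) = x}).topologicalClosure,
     ∀ z ∈ (Submodule.span ℂ {x : B | ∃ a b : A, (a : B) * S * (b : B) = x}).topologicalClosure,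
      x * star y * z ∈
        (Submodule.span ℂ {x : B | ∃ a b : A, (a : B) * S * (b : B) = x}).topologicalClosure) :=
  stmt14_general A S hS V H hcovH hcovV hcommH
end

section
/- Let X be a ternary ring of operators (a closed subspace of a C*-algebra with XX*X ⊆ X). Then every right operator on X commutes with every left operator on X. (A left operator L satisfies [x, L(y), z] = [x, y, L*(z)] for some adjoint L*, and a right operator R satisfies [R(x), y, z] = [x, R*(y), z], where [x,y,z] = xy*z.) -/
/-! Let `δ = R (L x) - L (R x)`. Moving `L` and `R` across the triple product by their
adjoint relations gives `[u, R (L x), v] = [Rs u, x, Ls v] = [u, L (R x), v]`, so every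
triple product with `δ` in the middle vanishes; in particular `δ δ* δ = 0`, which forces
`δ = 0` by the C*-identity. -/

theorem CStarRing.eq_zero_of_mul_star_mul_self_eq_zero {E : Type*} [NonUnitalNormedRing E]
    [StarRing E] [CStarRing E] {x : E} (h : x * star x * x = 0) : x = 0 := by
  have hsq : star (star x * x) * (star x * x) = 0 := by
    rw [(IsSelfAdjoint.star_mul_self x).star_eq, mul_assoc, ← mul_assoc x, h, mul_zero]
  exact (star_mul_self_eq_zero_iff x).mp ((star_mul_self_eq_zero_iff _).mp hsq)

theorem mul_star_mul_right_left_comm {B : Type*} [Mul B] [Star B] {S : Type*} [SetLike S B]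
    {X : S} {L Ls R Rs : X → X}
    (hL : ∀ x y z : X, (x : B) * star (L y : B) * (z : B) = (x : B) * star (y : B) * (Ls z : B))
    (hRs : ∀ x y z : X, (Rs x : B) * star (y : B) * (z : B) = (x : B) * star (R y : B) * (z : B))
    (x u v : X) : (u : B) * star (R (L x) : B) * v = u * star (L (R x) : B) * v := by
  rw [← hRs, hL, hL, ← hRs]

theorem stmt16_general
    {B : Type*} [CStarAlgebra B]
    (X : Submodule ℂ B)
    (L Ls R Rs : X → X)
    (hL : ∀ x y z : X, (x : B) * star (L y : B) * (z : B) = (x : B) * star (y : B) * (Ls z : B))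
    (hRs : ∀ x y z : X, (Rs x : B) * star (y : B) * (z : B) = (x : B) * star (R y : B) * (z : B)) :
    ∀ x : X, R (L x) = L (R x) := by
  intro x
  set δ : X := R (L x) - L (R x)
  have hδ : ∀ u v : X, (u : B) * star (δ : B) * v = 0 := fun u v => by
    rw [Submodule.coe_sub, star_sub, mul_sub, sub_mul, mul_star_mul_right_left_comm hL hRs,
      sub_self]
  exact sub_eq_zero.mp (Subtype.ext (CStarRing.eq_zero_of_mul_star_mul_self_eq_zero (hδ δ δ)))

/-- Let `X` be a ternary ring of operators (a closed subspace of a C*-algebra with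
`X X* X ⊆ X`), with ternary operation `[x,y,z] = x y* z`.  If `L` is a left
operator (with adjoint `Ls`, so `[x, L y, z] = [x, y, Ls z]` and
`[x, Ls y, z] = [x, y, L z]`) and `R` is a right operator (with adjoint `Rs`, so
`[R x, y, z] = [x, Rs y, z]` and `[Rs x, y, z] = [x, R y, z]`), then `R` commutes
with `L`. -/
theorem stmt16
    {B : Type*} [CStarAlgebra B]
    (X : Submodule ℂ B) (hXc : IsClosed (X : Set B))
    (hTRO : ∀ x ∈ X, ∀ y ∈ X, ∀ z ∈ X, x * star y * z ∈ X)
    (L Ls R Rs : X → X)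
    (hL : ∀ x y z : X, (x : B) * star (L y : B) * (z : B) = (x : B) * star (y : B) * (Ls z : B))
    (hLs : ∀ x y z : X, (x : B) * star (Ls y : B) * (z : B) = (x : B) * star (y : B) * (L z : B))
    (hR : ∀ x y z : X, (R x : B) * star (y : B) * (z : B) = (x : B) * star (Rs y : B) * (z : B))
    (hRs : ∀ x y z : X, (Rs x : B) * star (y : B) * (z : B) = (x : B) * star (R y : B) * (z : B)) :
    ∀ x : X, R (L x) = L (R x) :=
  stmt16_general X L Ls R Rs hL hRs
end

section
/- Let E be a conditional expectation on a C*-algebra A onto a subalgebra B. Then for all c, d ∈ A, E(cd*)E(dc*) ≤ E(cc*)·‖E(dd*)‖ in A. -/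
/-!
With `b = E(c d*)` and `x = c - t b d`, positivity of `E(x x*)` and the bimodule property give
`2t b b* ≤ E(c c*) + t² b E(d d*) b* ≤ E(c c*) + t² ‖E(d d*)‖ b b*` for every real `t`.
Taking `t = 1 / (‖E(d d*)‖ + ε)` yields `b b* ≤ (‖E(d d*)‖ + ε) E(c c*)`, and `ε → 0` finishes
since the positive cone is closed.
-/

theorem le_smul_of_forall_pos_two_smul_le {V : Type*} [AddCommGroup V] [PartialOrder V]
    [IsOrderedAddMonoid V] [Module ℝ V] [PosSMulMono ℝ V] [TopologicalSpace V]
    [ClosedIciTopology V] [ContinuousSMul ℝ V] {p q : V} {k : ℝ} (hp : 0 ≤ p) (hk : 0 ≤ k)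
    (h : ∀ t : ℝ, 0 < t → (2 * t) • p ≤ q + (t ^ 2 * k) • p) : p ≤ k • q := by
  have hpε : ∀ ε : ℝ, 0 < ε → p ≤ (k + ε) • q := by
    intro ε hε
    have hkε : 0 < k + ε := by linarith
    set t := (k + ε)⁻¹ with ht
    have hquad : (t ^ 2 * k) • p ≤ t • p := by
      refine smul_le_smul_of_nonneg_right ?_ hp
      rw [ht]; field_simp; linarith
    have htp : t • p ≤ q := by
      have := (h t (inv_pos.mpr hkε)).trans (add_le_add_right hquad q)
      rw [two_mul, add_smul] at this
      simpa using this
    calc p = (k + ε) • t • p := by rw [smul_smul, ht, mul_inv_cancel₀ hkε.ne', one_smul]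
      _ ≤ (k + ε) • q := smul_le_smul_of_nonneg_left htp hkε.le
  have hcont : Continuous fun ε : ℝ => (k + ε) • q := by fun_prop
  have hlim : Filter.Tendsto (fun ε : ℝ => (k + ε) • q) (nhdsWithin 0 (Set.Ioi 0))
      (nhds (k • q)) :=
    (hcont.tendsto' 0 _ (by simp)).mono_left nhdsWithin_le_nhds
  exact ge_of_tendsto hlim (eventually_nhdsWithin_of_forall hpε)

theorem star_map_mul_star {A F : Type*} [Mul A] [StarMul A] [FunLike F A A] {E : F}
    (hstar : ∀ a, E (star a) = star (E a)) (c d : A) :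
    star (E (c * star d)) = E (d * star c) := by
  rw [← hstar, star_mul, star_star]

section ConditionalExpectation

variable {A F : Type*} [NonUnitalCStarAlgebra A] [FunLike F A A] [LinearMapClass F ℂ A A]
  {E : F}

theorem map_mul_star_sub_smul_mul (hstar : ∀ a, E (star a) = star (E a))
    (hleft : ∀ a y, E (E a * y) = E a * E y) (hright : ∀ a y, E (y * E a) = E y * E a)
    (a c d : A) (t : ℝ) :
    E ((c - t • (E a * d)) * star (c - t • (E a * d))) =
      E (c * star c) - t • (E (c * star d) * star (E a) + E a * E (d * star c)) +
        t ^ 2 • (E a * E (d * star d) * star (E a)) := by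
  have hprod : (c - t • (E a * d)) * star (c - t • (E a * d)) =
      c * star c - t • (c * star d * E (star a) + E a * (d * star c)) +
        t ^ 2 • (E a * (d * star d * E (star a))) := by
    simp only [hstar, star_sub, star_smul, star_mul, star_trivial, sub_mul, mul_sub,
      smul_mul_assoc, mul_smul_comm, mul_assoc]
    module
  rw [hprod, map_add, map_sub, LinearMapClass.map_smul_of_tower E,
    LinearMapClass.map_smul_of_tower E, map_add, hright, hleft, hleft, hright, hstar, mul_assoc]

theorem two_smul_mul_star_le [PartialOrder A] [StarOrderedRing A]
    (hpos : ∀ a, 0 ≤ a → 0 ≤ E a) (hstar : ∀ a, E (star a) = star (E a))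
    (hleft : ∀ a y, E (E a * y) = E a * E y) (hright : ∀ a y, E (y * E a) = E y * E a)
    (c d : A) (t : ℝ) :
    (2 * t) • (E (c * star d) * star (E (c * star d))) ≤
      E (c * star c) + (t ^ 2 * ‖E (d * star d)‖) • (E (c * star d) * star (E (c * star d))) := by
  have hexpand := map_mul_star_sub_smul_mul hstar hleft hright (c * star d) c d t
  rw [← star_map_mul_star hstar c d] at hexpand
  have hnonneg := hpos _ (mul_star_self_nonneg (c - t • (E (c * star d) * d)))
  set b := E (c * star d)
  have hconj : b * E (d * star d) * star b ≤ ‖E (d * star d)‖ • (b * star b) :=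
    CStarAlgebra.star_right_conjugate_le_norm_smul
      (IsSelfAdjoint.of_nonneg (hpos _ (mul_star_self_nonneg d)))
  have hquad := smul_le_smul_of_nonneg_left hconj (sq_nonneg t)
  calc (2 * t) • (b * star b)
      ≤ (2 * t) • (b * star b) + E ((c - t • (b * d)) * star (c - t • (b * d))) :=
        le_add_of_nonneg_right hnonneg
    _ = E (c * star c) + t ^ 2 • (b * E (d * star d) * star b) := by rw [hexpand]; module
    _ ≤ E (c * star c) + t ^ 2 • (‖E (d * star d)‖ • (b * star b)) := add_le_add_right hquad _
    _ = E (c * star c) + (t ^ 2 * ‖E (d * star d)‖) • (b * star b) := by rw [mul_smul]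

end ConditionalExpectation

theorem stmt19_general
    {A : Type*} [CStarAlgebra A] [PartialOrder A] [StarOrderedRing A]
    (E : A →L[ℂ] A)
    (hEpos : ∀ a : A, 0 ≤ a → 0 ≤ E a)
    (hEstar : ∀ a : A, E (star a) = star (E a))
    (hEbimod : ∀ a b : A, E (E a * b) = E a * E b ∧ E (b * E a) = E b * E a) :
    ∀ c d : A,
      E (c * star d) * E (d * star c) ≤ ‖E (d * star d)‖ • E (c * star c) := by
  intro c d
  rw [← star_map_mul_star hEstar c d]
  exact le_smul_of_forall_pos_two_smul_le (mul_star_self_nonneg _) (norm_nonneg _) fun t _ ↦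
    two_smul_mul_star_le hEpos hEstar (fun a y ↦ (hEbimod a y).1) (fun a y ↦ (hEbimod a y).2) c d t

/-- Let `E` be a conditional expectation on a C*-algebra `A` onto a closed
*-subalgebra `B` (here `B` is the range of `E`).  Then for all `c, d ∈ A`,
`E(c d*) E(d c*) ≤ ‖E(d d*)‖ • E(c c*)`. -/
theorem stmt19
    {A : Type*} [CStarAlgebra A] [PartialOrder A] [StarOrderedRing A]
    (E : A →L[ℂ] A)
    (hEpos : ∀ a : A, 0 ≤ a → 0 ≤ E a)
    (hEidem : ∀ a : A, E (E a) = E a)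
    (hEstar : ∀ a : A, E (star a) = star (E a))
    (hEbimod : ∀ a b : A, E (E a * b) = E a * E b ∧ E (b * E a) = E b * E a) :
    ∀ c d : A,
      E (c * star d) * E (d * star c) ≤ ‖E (d * star d)‖ • E (c * star c) :=
  stmt19_general E hEpos hEstar hEbimod
end
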